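/- R(K_3, K_{10} - D_{3,3}) = 28, given that R(K_3, K_8) = 28. -/

import Mathlib

/-!
`K₁₀ - D₃,₃` embeds into the complement of `F` as soon as `F` has an independent 8-set `J` and
two vertices `u ≠ w` outside it whose traces `N(u) ∩ J`, `N(w) ∩ J` are disjoint and have at
most three elements each: `u`, `w` are the centres and the traces lie among their leaves.

Let `F` be triangle-free on at least 28 vertices with an independent 8-set `I` and no such
configuration. Then `F` has no independent 9-set, so every neighbourhood has at most 8 vertices,
and every vertex outside `I` has a neighbour in `I`. The vertices with at most three neighbours
in `I` have pairwise intersecting traces, hence are pairwise non-adjacent, so there are at most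
8 of them; as the at least 20 vertices outside `I` send at most 64 edges into `I`, many of them
have at most two neighbours in `I`. If the trace `T` of one of them has one element, or two of
them share a 2-element trace `T`, replacing `T` by these vertices gives a new independent 8-set
on which two further such vertices have a single neighbour each, which produces either the
configuration or an independent 9-set. Otherwise at least eight of them have distinct
2-element traces, pairwise intersecting inside `I`, against Erdős–Ko–Rado.

The lower bound holds because the eight non-centre vertices of `K₁₀ - D₃,₃` span a `K₈`.
-/

open SimpleGraph

/-- `H` is contained in `G` as a (not necessarily induced) subgraph. -/
def Contains {α β : Type*} (H : SimpleGraph α) (G : SimpleGraph β) : Prop :=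
  ∃ f : α → β, Function.Injective f ∧ ∀ ⦃a b⦄, H.Adj a b → G.Adj (f a) (f b)

/-- Every graph on `r` vertices contains a triangle or contains `H` in its complement. -/
def RamseyProp {β : Type*} (H : SimpleGraph β) (r : ℕ) : Prop :=
  ∀ F : SimpleGraph (Fin r), ¬ F.CliqueFree 3 ∨ Contains H Fᶜ

/-- `R` is the triangle Ramsey number `R(K_3, H)`. -/
def TriRamsey {β : Type*} (H : SimpleGraph β) (R : ℕ) : Prop :=
  IsLeast {r : ℕ | RamseyProp H r} R

/-- `K_k` minus the edges of the double star `D_{m,m}`: centers `0` and `1` are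
adjacent, `0` has the extra leaves `2,…,m+1` and `1` has the extra leaves
`m+2,…,2m+1`. -/
def KnMinusDoubleStar (k m : ℕ) : SimpleGraph (Fin k) :=
  (SimpleGraph.fromRel (fun a b : Fin k =>
    (a.val = 0 ∧ b.val = 1) ∨
    (a.val = 0 ∧ 2 ≤ b.val ∧ b.val ≤ m + 1) ∨
    (a.val = 1 ∧ m + 2 ≤ b.val ∧ b.val ≤ 2 * m + 1)))ᶜ

open Finset

lemma contains_iff_isContained {α β : Type*} {H : SimpleGraph α} {G : SimpleGraph β} :
    Contains H G ↔ H ⊑ G :=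
  ⟨fun ⟨f, hf, hadj⟩ => ⟨⟨⟨f, fun h => hadj h⟩, hf⟩⟩,
    fun ⟨c⟩ => ⟨c.toHom, c.injective, fun _ _ h => c.toHom.map_adj h⟩⟩

lemma RamseyProp.of_isContained {α β : Type*} {H : SimpleGraph α} {H' : SimpleGraph β} {r : ℕ}
    (hH : H' ⊑ H) (h : RamseyProp H r) : RamseyProp H' r := fun F =>
  (h F).imp_right fun hF => contains_iff_isContained.2 (hH.trans (contains_iff_isContained.1 hF))

lemma top_isContained_knMinusDoubleStar (n m : ℕ) :
    (⊤ : SimpleGraph (Fin n)) ⊑ KnMinusDoubleStar (n + 2) m :=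
  ⟨⟨⟨fun i => ⟨i + 2, by omega⟩, fun {i j} hij => by
    simp only [KnMinusDoubleStar, compl_adj, fromRel_adj, ne_eq, Fin.mk.injEq, top_adj] at hij ⊢
    omega⟩, fun i j h => Fin.ext (by simpa using h)⟩⟩

lemma exists_isIndepSet_card_eq {V : Type*} {F : SimpleGraph V} {n : ℕ}
    (h : Contains (⊤ : SimpleGraph (Fin n)) Fᶜ) : ∃ I : Finset V, F.IsIndepSet I ∧ #I = n := by
  rw [contains_iff_isContained, ← not_cliqueFree_iff_top_isContained, CliqueFree] at h
  push Not at h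
  obtain ⟨I, hI, hIn⟩ := h
  exact ⟨I, (isClique_compl F).1 hI, hIn⟩

theorem erdos_ko_rado_of_subset {α : Type*} [DecidableEq α] {s : Finset α}
    {𝒜 : Finset (Finset α)} {r : ℕ} (h𝒜s : ∀ t ∈ 𝒜, t ⊆ s)
    (h𝒜 : (𝒜 : Set (Finset α)).Intersecting) (hr : (𝒜 : Set (Finset α)).Sized r)
    (hrs : r ≤ #s / 2) : #𝒜 ≤ (#s - 1).choose (r - 1) := by
  let φ : Finset α → Finset (Fin #s) := fun t => (t.subtype (· ∈ s)).map s.equivFin.toEmbedding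
  let g : Fin #s ↪ α := s.equivFin.symm.toEmbedding.trans (Function.Embedding.subtype _)
  have hgφ : ∀ t ∈ 𝒜, (φ t).map g = t := fun t ht => by
    ext x
    simp only [φ, g, Finset.map_map, mem_map, mem_subtype, Function.Embedding.trans_apply,
      Equiv.coe_toEmbedding, Function.Embedding.subtype_apply]
    constructor
    · rintro ⟨a, ha, rfl⟩
      simpa using ha
    · exact fun hx => ⟨⟨x, h𝒜s t ht hx⟩, hx, by simp⟩
  have hinj : Set.InjOn φ 𝒜 := fun t ht t' ht' h => by
    rw [← hgφ t ht, ← hgφ t' ht', h]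
  rw [← card_image_of_injOn hinj]
  refine erdos_ko_rado ?_ ?_ hrs
  · simp only [coe_image, Set.Intersecting, Set.mem_image, mem_coe]
    rintro _ ⟨t, ht, rfl⟩ _ ⟨t', ht', rfl⟩ hdisj
    refine h𝒜 ht ht' ?_
    rw [← hgφ t ht, ← hgφ t' ht']
    exact (disjoint_map _).2 hdisj
  · simp only [coe_image, Set.Sized, Set.mem_image, mem_coe]
    rintro _ ⟨t, ht, rfl⟩
    rw [← hr ht, ← card_map g, hgφ t ht]

lemma contains_compl_knMinusDoubleStar_of_nodup {V : Type*} {F : SimpleGraph V} {k m : ℕ}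
    {u w : V} {M : List V} (hM : (u :: w :: M).Nodup) (hk : M.length + 2 = k)
    (hind : ∀ x ∈ M, ∀ y ∈ M, ¬F.Adj x y) (hu : ∀ n (h : n < M.length), m ≤ n → ¬F.Adj u M[n])
    (hw : ∀ n (h : n < M.length), n < m ∨ 2 * m ≤ n → ¬F.Adj w M[n]) :
    Contains (KnMinusDoubleStar k m) Fᶜ := by
  have hL : (u :: w :: M).length = k := by simp [← hk]
  have hinj : Function.Injective fun i : Fin k => (u :: w :: M)[i.1]'(hL ▸ i.2) :=
    fun i j h => Fin.ext (hM.getElem_inj_iff.1 h)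
  refine ⟨_, hinj, fun a b hab => (compl_adj _ _ _).2 ⟨fun h => hab.ne (hinj h), ?_⟩⟩
  rcases a with ⟨_ | _ | a, ha⟩ <;> rcases b with ⟨_ | _ | b, hb⟩ <;>
    simp only [KnMinusDoubleStar, compl_adj, fromRel_adj, ne_eq, Fin.mk.injEq, true_and] at hab <;>
    simp only [List.getElem_cons_zero, List.getElem_cons_succ]
  · exact F.irrefl
  · simp at hab
  · exact hu b _ (by omega)
  · simp at hab
  · exact F.irrefl
  · exact hw b _ (by omega)
  · exact fun h => hu a _ (by omega) h.symm
  · exact fun h => hw a _ (by omega) h.symm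
  · exact hind _ (List.getElem_mem _) _ (List.getElem_mem _)

lemma getElem_append_toList_mem {α : Type*} {A B C : Finset α} {n : ℕ}
    (h : n < (A.toList ++ B.toList ++ C.toList).length) :
    (A.toList ++ B.toList ++ C.toList)[n] ∈ if n < #A then A else if n < #A + #B then B else C := by
  simp only [List.getElem_append, List.length_append, length_toList]
  split_ifs <;> first | omega | exact mem_toList.1 (List.getElem_mem _)

lemma isIndepSet_insert_of_not_adj {V : Type*} {F : SimpleGraph V} {s : Set V} {a : V}
    (hs : F.IsIndepSet s) (ha : ∀ x ∈ s, ¬F.Adj a x) : F.IsIndepSet (insert a s) :=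
  hs.insert fun x hx _ => ⟨ha x hx, fun h => ha x hx h.symm⟩

lemma isIndepSet_filter_adj {V : Type*} {F : SimpleGraph V} [DecidableRel F.Adj]
    (hF : F.CliqueFree 3) (s : Finset V) (v : V) : F.IsIndepSet ↑{x ∈ s | F.Adj v x} :=
  (F.isIndepSet_neighborSet_of_triangleFree hF v).mono fun _ hx => (mem_filter.1 hx).2

section Traces

variable {V : Type*} [DecidableEq V] {F : SimpleGraph V} [DecidableRel F.Adj]

lemma not_adj_of_not_disjoint (hF : F.CliqueFree 3) {I : Finset V} {u w : V}
    (h : ¬Disjoint {x ∈ I | F.Adj u x} {x ∈ I | F.Adj w x}) : ¬F.Adj u w := by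
  obtain ⟨y, hy⟩ := not_disjoint_iff_nonempty_inter.1 h
  simp only [mem_inter, mem_filter] at hy
  exact fun huw => F.isIndepSet_neighborSet_of_triangleFree hF y hy.1.2.symm hy.2.2.symm huw.ne huw

theorem contains_compl_knMinusDoubleStar {k m : ℕ} {J : Finset V} {u w : V}
    (hJ : F.IsIndepSet J) (hJk : #J + 2 = k) (hm : 2 * m ≤ #J) (hu : u ∉ J) (hw : w ∉ J)
    (huw : u ≠ w) (hum : #{x ∈ J | F.Adj u x} ≤ m) (hwm : #{x ∈ J | F.Adj w x} ≤ m)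
    (hdisj : Disjoint {x ∈ J | F.Adj u x} {x ∈ J | F.Adj w x}) :
    Contains (KnMinusDoubleStar k m) Fᶜ := by
  obtain ⟨A, hNuA, hAJ, hA⟩ :
      ∃ A, {x ∈ J | F.Adj u x} ⊆ A ∧ A ⊆ J \ {x ∈ J | F.Adj w x} ∧ #A = m :=
    exists_subsuperset_card_eq (subset_sdiff.2 ⟨filter_subset _ _, hdisj⟩) hum
      (by rw [card_sdiff_of_subset (filter_subset _ _)]; omega)
  obtain ⟨B, hNwB, hBJ, hB⟩ : ∃ B, {x ∈ J | F.Adj w x} ⊆ B ∧ B ⊆ J \ A ∧ #B = m :=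
    exists_subsuperset_card_eq (subset_sdiff.2 ⟨filter_subset _ _,
        disjoint_left.2 fun x hx hxA => (mem_sdiff.1 (hAJ hxA)).2 hx⟩)
      hwm (by rw [card_sdiff_of_subset (hAJ.trans sdiff_subset)]; omega)
  -- `A` fills the leaves of `u`, `B` those of `w`, and the rest of `J` the remaining vertices.
  set M := A.toList ++ B.toList ++ ((J \ A) \ B).toList
  have hlen : M.length = #J := by
    simp only [M, List.length_append, length_toList, hA, hB, card_sdiff_of_subset hBJ,
      card_sdiff_of_subset (hAJ.trans sdiff_subset)]
    omega
  have hM : ∀ n (h : n < M.length),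
      M[n] ∈ J ∧ (m ≤ n → M[n] ∉ A) ∧ (n < m ∨ 2 * m ≤ n → M[n] ∉ B) := by
    intro n h
    have hx := getElem_append_toList_mem h
    rw [hA, hB] at hx
    split_ifs at hx
    · exact ⟨(mem_sdiff.1 (hAJ hx)).1, by omega, fun _ hB' => (mem_sdiff.1 (hBJ hB')).2 hx⟩
    · exact ⟨(mem_sdiff.1 (hBJ hx)).1, fun _ => (mem_sdiff.1 (hBJ hx)).2, by omega⟩
    · exact ⟨(mem_sdiff.1 (mem_sdiff.1 hx).1).1, fun _ => (mem_sdiff.1 (mem_sdiff.1 hx).1).2,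
        fun _ => (mem_sdiff.1 hx).2⟩
  have hMJ : ∀ x ∈ M, x ∈ J := fun x hx => by
    obtain ⟨n, h, rfl⟩ := List.mem_iff_getElem.1 hx
    exact (hM n h).1
  have hMnodup : M.Nodup := by
    simp only [M, List.nodup_append, nodup_toList, mem_toList, List.mem_append, true_and]
    refine ⟨fun a ha b hb hab => (mem_sdiff.1 (hBJ hb)).2 (hab ▸ ha), ?_⟩
    rintro a (ha | ha) b hb rfl
    · exact (mem_sdiff.1 (mem_sdiff.1 hb).1).2 ha
    · exact (mem_sdiff.1 hb).2 ha
  refine contains_compl_knMinusDoubleStar_of_nodup (M := M)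
    (List.nodup_cons.2 ⟨fun h => (List.mem_cons.1 h).elim huw fun h => hu (hMJ u h),
      List.nodup_cons.2 ⟨fun h => hw (hMJ w h), hMnodup⟩⟩) (by omega)
    (fun x hx y hy h => hJ (hMJ x hx) (hMJ y hy) h.ne h) (fun n h hn hadj => ?_)
    (fun n h hn hadj => ?_)
  · exact (hM n h).2.1 hn (hNuA (mem_filter.2 ⟨(hM n h).1, hadj⟩))
  · exact (hM n h).2.2 hn (hNwB (mem_filter.2 ⟨(hM n h).1, hadj⟩))

lemma not_disjoint_filter_adj (hH : ¬Contains (KnMinusDoubleStar 10 3) Fᶜ) {J : Finset V}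
    {u w : V} (hJ : F.IsIndepSet J) (hJ8 : #J = 8) (hu : u ∉ J) (hw : w ∉ J) (huw : u ≠ w)
    (hu3 : #{x ∈ J | F.Adj u x} ≤ 3) (hw3 : #{x ∈ J | F.Adj w x} ≤ 3) :
    ¬Disjoint {x ∈ J | F.Adj u x} {x ∈ J | F.Adj w x} := fun h =>
  hH (contains_compl_knMinusDoubleStar hJ (by omega) (by omega) hu hw huw hu3 hw3 h)

lemma card_lt_ten_of_isIndepSet (hH : ¬Contains (KnMinusDoubleStar 10 3) Fᶜ) {J : Finset V}
    (hJ : F.IsIndepSet J) : #J < 10 := by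
  by_contra! h
  obtain ⟨I, hIJ, hI⟩ := exists_subset_card_eq (show 8 ≤ #J by omega)
  obtain ⟨u, hu, w, hw, huw⟩ :=
    one_lt_card.1 (show 1 < #(J \ I) by rw [card_sdiff_of_subset hIJ]; omega)
  have hempty : ∀ v ∈ J \ I, {x ∈ I | F.Adj v x} = ∅ := fun v hv =>
    filter_eq_empty_iff.2 fun x hx hadj => hJ (mem_sdiff.1 hv).1 (hIJ hx) hadj.ne hadj
  refine not_disjoint_filter_adj hH (hJ.mono (coe_subset.2 hIJ)) hI (mem_sdiff.1 hu).2
    (mem_sdiff.1 hw).2 huw ?_ ?_ ?_ <;> simp [hempty u hu, hempty w hw]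

lemma five_le_card_filter_adj (hH : ¬Contains (KnMinusDoubleStar 10 3) Fᶜ) {I : Finset V}
    (hI : F.IsIndepSet I) (hI9 : #I = 9) {u : V} (hu : u ∉ I) : 5 ≤ #{x ∈ I | F.Adj u x} := by
  by_contra! hu4
  obtain ⟨w, hwI, hw⟩ : ∃ w ∈ I, #{x ∈ I.erase w | F.Adj u x} ≤ 3 := by
    rcases ({x ∈ I | F.Adj u x}).eq_empty_or_nonempty with h0 | ⟨w, hw⟩
    · obtain ⟨w, hw⟩ := card_pos.1 (by omega : 0 < #I)
      exact ⟨w, hw, by simp [filter_erase, h0]⟩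
    · exact ⟨w, (mem_filter.1 hw).1, by rw [filter_erase, card_erase_of_mem hw]; omega⟩
  have hw0 : {x ∈ I.erase w | F.Adj w x} = ∅ := filter_eq_empty_iff.2 fun x hx hadj =>
    hI hwI (mem_of_mem_erase hx) hadj.ne hadj
  refine not_disjoint_filter_adj hH (hI.mono (coe_subset.2 (erase_subset w I)))
    (by rw [card_erase_of_mem hwI, hI9]) (fun h => hu (mem_of_mem_erase h)) (notMem_erase w I)
    (fun h => hu (h ▸ hwI)) hw (by simp [hw0]) (by simp [hw0])

lemma card_le_seven_of_injOn (hH : ¬Contains (KnMinusDoubleStar 10 3) Fᶜ) {I P : Finset V}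
    (hI : F.IsIndepSet I) (hI8 : #I = 8) (hP : ∀ u ∈ P, u ∉ I ∧ #{x ∈ I | F.Adj u x} = 2)
    (hinj : Set.InjOn (fun u => {x ∈ I | F.Adj u x}) P) : #P ≤ 7 := by
  rw [← card_image_of_injOn hinj]
  refine (erdos_ko_rado_of_subset (s := I) (r := 2) ?_ ?_ ?_ (by omega)).trans
    (by simp [hI8])
  · simp only [mem_image]
    rintro _ ⟨u, -, rfl⟩
    exact filter_subset _ _
  · simp only [coe_image, Set.Intersecting, Set.mem_image, mem_coe]
    rintro _ ⟨u, hu, rfl⟩ _ ⟨w, hw, rfl⟩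
    obtain rfl | huw := eq_or_ne u w
    · rw [disjoint_self_iff_empty, ← card_eq_zero, (hP u hu).2]
      omega
    · exact not_disjoint_filter_adj hH hI hI8 (hP u hu).1 (hP w hw).1 huw
        ((hP u hu).2.le.trans (by norm_num)) ((hP w hw).2.le.trans (by norm_num))
  · simp only [coe_image, Set.Sized, Set.mem_image, mem_coe]
    rintro _ ⟨u, hu, rfl⟩
    exact (hP u hu).2

lemma isIndepSet_sdiff_union (hF : F.CliqueFree 3) {I X T : Finset V} (hI : F.IsIndepSet I)
    (hT : T.Nonempty) (hX : ∀ x ∈ X, {y ∈ I | F.Adj x y} = T) : F.IsIndepSet ↑(I \ T ∪ X) := by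
  have hXadj : ∀ x ∈ X, ∀ y ∈ I, F.Adj x y → y ∈ T := fun x hx y hy hadj =>
    hX x hx ▸ mem_filter.2 ⟨hy, hadj⟩
  intro a ha b hb hab hadj
  simp only [coe_union, coe_sdiff, Set.mem_union, Set.mem_sdiff, mem_coe] at ha hb
  rcases ha with ⟨haI, haT⟩ | haX <;> rcases hb with ⟨hbI, hbT⟩ | hbX
  · exact hI haI hbI hab hadj
  · exact haT (hXadj b hbX a haI hadj.symm)
  · exact hbT (hXadj a haX b hbI hadj)
  · refine not_adj_of_not_disjoint hF (I := I) ?_ hadj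
    rw [hX a haX, hX b hbX, disjoint_self_iff_empty]
    exact hT.ne_empty

variable [Fintype V]

lemma card_le_eight_of_isIndepSet (hF : F.CliqueFree 3)
    (hH : ¬Contains (KnMinusDoubleStar 10 3) Fᶜ) (hV : 28 ≤ Fintype.card V) {J : Finset V}
    (hJ : F.IsIndepSet J) : #J ≤ 8 := by
  by_contra! h
  obtain ⟨I, hIJ, hI⟩ := exists_subset_card_eq (show 9 ≤ #J by omega)
  have hheavy : ∀ u ∈ Iᶜ, 5 ≤ #{x ∈ I | F.Adj u x} := fun u hu =>
    five_le_card_filter_adj hH (hJ.mono (coe_subset.2 hIJ)) hI (mem_compl.1 hu)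
  have hlight : ∀ v ∈ I, #(Iᶜ.bipartiteBelow F.Adj v) ≤ 9 := fun v _ => by
    rw [bipartiteBelow, filter_congr fun x _ => F.adj_comm x v]
    exact Nat.lt_succ_iff.1 (card_lt_ten_of_isIndepSet hH (isIndepSet_filter_adj hF _ v))
  have := card_mul_le_card_mul F.Adj hheavy hlight
  rw [card_compl, hI] at this
  omega

lemma filter_adj_nonempty (hF : F.CliqueFree 3) (hH : ¬Contains (KnMinusDoubleStar 10 3) Fᶜ)
    (hV : 28 ≤ Fintype.card V) {I : Finset V} (hI : F.IsIndepSet I) (hI8 : #I = 8) {u : V}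
    (hu : u ∉ I) : ({x ∈ I | F.Adj u x}).Nonempty := by
  rw [nonempty_iff_ne_empty, Ne, filter_eq_empty_iff]
  intro h
  have := card_le_eight_of_isIndepSet hF hH hV
    (J := insert u I) (by rw [coe_insert]; exact isIndepSet_insert_of_not_adj hI h)
  rw [card_insert_of_notMem hu] at this
  omega

lemma false_of_card_filter_adj_le_one (hF : F.CliqueFree 3)
    (hH : ¬Contains (KnMinusDoubleStar 10 3) Fᶜ) (hV : 28 ≤ Fintype.card V) {J : Finset V}
    (hJ : F.IsIndepSet J) (hJ8 : #J = 8) {w₁ w₂ : V} (hw₁ : w₁ ∉ J) (hw₂ : w₂ ∉ J)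
    (hw : w₁ ≠ w₂) (h₁ : #{x ∈ J | F.Adj w₁ x} ≤ 1) (h₂ : #{x ∈ J | F.Adj w₂ x} ≤ 1) :
    False := by
  obtain ⟨y, hy₁⟩ := card_eq_one.1
    (le_antisymm h₁ (card_pos.2 (filter_adj_nonempty hF hH hV hJ hJ8 hw₁)))
  obtain ⟨y₂, hy₂⟩ := card_eq_one.1
    (le_antisymm h₂ (card_pos.2 (filter_adj_nonempty hF hH hV hJ hJ8 hw₂)))
  have hmeet := not_disjoint_filter_adj hH hJ hJ8 hw₁ hw₂ hw (by omega) (by omega)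
  obtain rfl : y = y₂ := by rwa [hy₁, hy₂, disjoint_singleton, not_not] at hmeet
  have hyJ : y ∈ J := (mem_filter.1 (hy₁ ▸ mem_singleton_self y)).1
  have hrest : ∀ w, {x ∈ J | F.Adj w x} = {y} → ∀ x ∈ (J.erase y : Set V), ¬F.Adj w x :=
    fun w hw x hx hadj => (mem_erase.1 hx).1
      (mem_singleton.1 (hw ▸ mem_filter.2 ⟨(mem_erase.1 hx).2, hadj⟩))
  have hind : F.IsIndepSet ↑(insert w₁ (insert w₂ (J.erase y))) := by
    rw [coe_insert, coe_insert]
    refine isIndepSet_insert_of_not_adj (isIndepSet_insert_of_not_adj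
      (hJ.mono (coe_subset.2 (erase_subset _ _))) (hrest w₂ hy₂)) ?_
    rintro x (rfl | hx)
    · exact not_adj_of_not_disjoint hF hmeet
    · exact hrest w₁ hy₁ x hx
  have hw₂' : w₂ ∉ J.erase y := fun h => hw₂ (mem_of_mem_erase h)
  have hw₁' : w₁ ∉ insert w₂ (J.erase y) := by
    rw [mem_insert, not_or]
    exact ⟨hw, fun h => hw₁ (mem_of_mem_erase h)⟩
  have := card_le_eight_of_isIndepSet hF hH hV hind
  rw [card_insert_of_notMem hw₁', card_insert_of_notMem hw₂', card_erase_of_mem hyJ, hJ8] at this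
  omega

/-- Exchanging the common trace `T` of the vertices of `X` for `X` itself gives an independent
8-set on which every vertex of `W` has at most one neighbour. -/
lemma false_of_exchange (hF : F.CliqueFree 3) (hH : ¬Contains (KnMinusDoubleStar 10 3) Fᶜ)
    (hV : 28 ≤ Fintype.card V) {I X T W : Finset V} (hI : F.IsIndepSet I) (hI8 : #I = 8)
    (hTI : T ⊆ I) (hT : T.Nonempty) (hXT : #X = #T)
    (hX : ∀ x ∈ X, x ∉ I ∧ {y ∈ I | F.Adj x y} = T) (hW : 1 < #W)
    (hWX : ∀ w ∈ W, w ∉ I ∧ w ∉ X ∧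
      ¬Disjoint {y ∈ I | F.Adj w y} T ∧ #{y ∈ I | F.Adj w y} ≤ 2) : False := by
  have hJ := isIndepSet_sdiff_union hF hI hT fun x hx => (hX x hx).2
  have hJ8 : #(I \ T ∪ X) = 8 := by
    rw [card_union_of_disjoint (disjoint_left.2 fun x hx hxX => (hX x hxX).1 (mem_sdiff.1 hx).1),
      card_sdiff_of_subset hTI, hXT, hI8, Nat.sub_add_cancel (hI8 ▸ card_le_card hTI)]
  have htrace : ∀ w ∈ W, w ∉ I \ T ∪ X ∧ #{y ∈ I \ T ∪ X | F.Adj w y} ≤ 1 := by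
    intro w hw
    obtain ⟨hwI, hwX, hwT, hw2⟩ := hWX w hw
    refine ⟨by simp [hwI, hwX], ?_⟩
    have hsub : {y ∈ I \ T ∪ X | F.Adj w y} ⊆ {y ∈ I | F.Adj w y} \ T := by
      intro y hy
      simp only [mem_filter, mem_union, mem_sdiff] at hy ⊢
      rcases hy with ⟨⟨hyI, hyT⟩ | hyX, hadj⟩
      · exact ⟨⟨hyI, hadj⟩, hyT⟩
      · exact absurd hadj (not_adj_of_not_disjoint hF (by rwa [(hX y hyX).2]))
    have := card_le_card hsub
    rw [card_sdiff, inter_comm] at this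
    have := card_pos.2 (not_disjoint_iff_nonempty_inter.1 hwT)
    omega
  obtain ⟨w₁, hw₁, w₂, hw₂, hw⟩ := one_lt_card.1 hW
  exact false_of_card_filter_adj_le_one hF hH hV hJ hJ8 (htrace w₁ hw₁).1 (htrace w₂ hw₂).1 hw
    (htrace w₁ hw₁).2 (htrace w₂ hw₂).2

/-- `#{u₁, u₂} = #{x ∈ I | F.Adj u₁ x}` covers both a single vertex with a one-element trace and
two vertices sharing a two-element trace. -/
lemma false_of_filter_adj_eq (hF : F.CliqueFree 3) (hH : ¬Contains (KnMinusDoubleStar 10 3) Fᶜ)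
    (hV : 28 ≤ Fintype.card V) {I P : Finset V} (hI : F.IsIndepSet I) (hI8 : #I = 8)
    (hP : ∀ u ∈ P, u ∉ I ∧ 0 < #{x ∈ I | F.Adj u x} ∧ #{x ∈ I | F.Adj u x} ≤ 2) (hP4 : 4 ≤ #P)
    {u₁ u₂ : V} (hu₁ : u₁ ∈ P) (hu₂ : u₂ ∈ P) (htr : {x ∈ I | F.Adj u₁ x} = {x ∈ I | F.Adj u₂ x})
    (hcard : #{u₁, u₂} = #{x ∈ I | F.Adj u₁ x}) : False := by
  have hW : 1 < #(P \ {u₁, u₂}) := by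
    have := le_card_sdiff {u₁, u₂} P
    have := card_le_two (a := u₁) (b := u₂)
    omega
  refine false_of_exchange hF hH hV hI hI8 (filter_subset _ _)
    (card_pos.1 (hP u₁ hu₁).2.1) hcard ?_ hW fun w hw => ?_
  · intro x hx
    rcases mem_insert.1 hx with rfl | hx
    · exact ⟨(hP x hu₁).1, rfl⟩
    · rw [mem_singleton.1 hx]
      exact ⟨(hP u₂ hu₂).1, htr.symm⟩
  · obtain ⟨hwP, hwX⟩ := mem_sdiff.1 hw
    have hwu₁ : w ≠ u₁ := fun h => hwX (h ▸ mem_insert_self _ _)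
    exact ⟨(hP w hwP).1, hwX, not_disjoint_filter_adj hH hI hI8 (hP w hwP).1 (hP u₁ hu₁).1 hwu₁
      ((hP w hwP).2.2.trans (by norm_num)) ((hP u₁ hu₁).2.2.trans (by norm_num)), (hP w hwP).2.2⟩

lemma sum_card_filter_adj_le (hF : F.CliqueFree 3) (hH : ¬Contains (KnMinusDoubleStar 10 3) Fᶜ)
    (hV : 28 ≤ Fintype.card V) {I : Finset V} (hI8 : #I = 8) :
    ∑ u ∈ Iᶜ, #{x ∈ I | F.Adj u x} ≤ 64 :=
  calc ∑ u ∈ Iᶜ, #{x ∈ I | F.Adj u x} = ∑ v ∈ I, #(Iᶜ.bipartiteBelow F.Adj v) :=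
        sum_card_bipartiteAbove_eq_sum_card_bipartiteBelow _
    _ ≤ ∑ _v ∈ I, 8 := sum_le_sum fun v _ => by
        rw [bipartiteBelow, filter_congr fun x _ => F.adj_comm x v]
        exact card_le_eight_of_isIndepSet hF hH hV (isIndepSet_filter_adj hF _ v)
    _ = 64 := by simp [hI8]

lemma eight_le_card_add_card (hF : F.CliqueFree 3) (hH : ¬Contains (KnMinusDoubleStar 10 3) Fᶜ)
    (hV : 28 ≤ Fintype.card V) {I : Finset V} (hI : F.IsIndepSet I) (hI8 : #I = 8) :
    8 ≤ #{u ∈ Iᶜ | #{x ∈ I | F.Adj u x} ≤ 2} + #{u ∈ Iᶜ | #{x ∈ I | F.Adj u x} ≤ 1} := by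
  have hS : #{u ∈ Iᶜ | #{x ∈ I | F.Adj u x} ≤ 3} ≤ 8 := by
    refine card_le_eight_of_isIndepSet hF hH hV fun u hu w hw huw => ?_
    simp only [mem_coe, mem_filter, mem_compl] at hu hw
    exact not_adj_of_not_disjoint hF (not_disjoint_filter_adj hH hI hI8 hu.1 hw.1 huw hu.2 hw.2)
  have hpoint : ∀ u ∈ Iᶜ, 4 ≤ #{x ∈ I | F.Adj u x}
      + (if #{x ∈ I | F.Adj u x} ≤ 3 then 1 else 0)
      + (if #{x ∈ I | F.Adj u x} ≤ 2 then 1 else 0)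
      + (if #{x ∈ I | F.Adj u x} ≤ 1 then 1 else 0) := fun u hu => by
    have := card_pos.2 (filter_adj_nonempty hF hH hV hI hI8 (mem_compl.1 hu))
    split_ifs <;> omega
  have := sum_le_sum hpoint
  simp only [sum_add_distrib, ← card_filter, sum_const, smul_eq_mul, card_compl, hI8] at this
  have := sum_card_filter_adj_le hF hH hV hI8
  omega

end Traces

theorem contains_compl_knMinusDoubleStar_of_cliqueFree {V : Type*} [Fintype V] [DecidableEq V]
    {F : SimpleGraph V} [DecidableRel F.Adj] (hF : F.CliqueFree 3) (hV : 28 ≤ Fintype.card V)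
    {I : Finset V} (hI : F.IsIndepSet I) (hI8 : #I = 8) :
    Contains (KnMinusDoubleStar 10 3) Fᶜ := by
  by_contra hH
  have hcount := eight_le_card_add_card hF hH hV hI hI8
  set P := {u ∈ Iᶜ | #{x ∈ I | F.Adj u x} ≤ 2}
  have hP : ∀ u ∈ P, u ∉ I ∧ 0 < #{x ∈ I | F.Adj u x} ∧ #{x ∈ I | F.Adj u x} ≤ 2 :=
    fun u hu => by
      obtain ⟨hu, hu2⟩ := mem_filter.1 hu
      exact ⟨mem_compl.1 hu, card_pos.2 (filter_adj_nonempty hF hH hV hI hI8 (mem_compl.1 hu)),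
        hu2⟩
  have hQP : #{u ∈ Iᶜ | #{x ∈ I | F.Adj u x} ≤ 1} ≤ #P :=
    card_le_card (monotone_filter_right _ fun _ _ h => h.trans (by norm_num))
  by_cases hX : ∃ u₁ ∈ P, ∃ u₂ ∈ P,
      {x ∈ I | F.Adj u₁ x} = {x ∈ I | F.Adj u₂ x} ∧ #{u₁, u₂} = #{x ∈ I | F.Adj u₁ x}
  · obtain ⟨u₁, hu₁, u₂, hu₂, htr, hcard⟩ := hX
    exact false_of_filter_adj_eq hF hH hV hI hI8 hP (by omega) hu₁ hu₂ htr hcard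
  · push Not at hX
    have htwo : ∀ u ∈ P, #{x ∈ I | F.Adj u x} = 2 := fun u hu => by
      have := hX u hu u hu rfl
      rw [insert_eq_of_mem (mem_singleton_self u), card_singleton] at this
      have := hP u hu
      omega
    have hQ : #{u ∈ Iᶜ | #{x ∈ I | F.Adj u x} ≤ 1} = 0 := by
      refine card_eq_zero.2 (filter_eq_empty_iff.2 fun u hu h1 => ?_)
      have := htwo u (mem_filter.2 ⟨hu, h1.trans (by norm_num)⟩)
      omega
    have := card_le_seven_of_injOn hH hI hI8 (P := P) (fun u hu => ⟨(hP u hu).1, htwo u hu⟩)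
      fun u₁ hu₁ u₂ hu₂ htr => by
        by_contra hne
        exact hX u₁ hu₁ u₂ hu₂ htr (by rw [card_pair hne, htwo u₁ hu₁])
    omega

theorem stmt7 (h8 : TriRamsey (⊤ : SimpleGraph (Fin 8)) 28) :
    TriRamsey (KnMinusDoubleStar 10 3) 28 := by
  refine ⟨fun F => ?_, fun r hr => h8.2 (hr.of_isContained (top_isContained_knMinusDoubleStar 8 3))⟩
  classical
  by_cases hF : F.CliqueFree 3
  · obtain ⟨I, hI, hI8⟩ := exists_isIndepSet_card_eq ((h8.1 F).resolve_left (not_not.2 hF))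
    exact Or.inr (contains_compl_knMinusDoubleStar_of_cliqueFree hF (by simp) hI hI8)
  · exact Or.inl hF
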